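/- On ℝ⁴ with coordinates (x, y, z, s), consider 1-forms β₋, β₊ with dβ_± = (ln λ_±)·dz ∧ β_± where λ₋·λ₊ = 1 and λ₋ ∈ (0,1). Set Λ = β₋ + s·β₊ and Ω = dΛ = dz ∧ (ln λ₋·β₋ + s·ln λ₊·β₊) + ds ∧ β₊. If β₋ ∧ β₊ is nowhere zero and both β_± annihilate ∂z, ∂s, then Ω ∧ Ω = 2·(ln λ₋)·dz ∧ β₋ ∧ ds ∧ β₊ is nowhere zero, so Ω is a symplectic form. -/
import Mathlib


/-- Wedge product of two 2-forms evaluated on four vectors. -/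
def wedge22 {V : Type*} (ω η : V → V → ℝ) (a b c d : V) : ℝ :=
  ω a b * η c d - ω a c * η b d + ω a d * η b c
    + ω b c * η a d - ω b d * η a c + ω c d * η a b

/-- Wedge product of four 1-forms evaluated on four vectors (a determinant). -/
def wedge1111 {V : Type*} (α₁ α₂ α₃ α₄ : V → ℝ) (a b c d : V) : ℝ :=
  Matrix.det (Matrix.of fun i j => ![α₁, α₂, α₃, α₄] i (![a, b, c, d] j))

/-- The 2-form `Ω = dΛ = dz ∧ (ln λ₋·β₋ + s·ln λ₊·β₊) + ds ∧ β₊` on `ℝ⁴` with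
coordinates `(x, y, z, s) = (x 0, x 1, x 2, x 3)`. -/
noncomputable def OmegaForm (lm lp : ℝ) (βm βp : (Fin 4 → ℝ) → ((Fin 4 → ℝ) →ₗ[ℝ] ℝ))
    (x u v : Fin 4 → ℝ) : ℝ :=
  u 2 * (Real.log lm * βm x v + x 3 * Real.log lp * βp x v)
    - v 2 * (Real.log lm * βm x u + x 3 * Real.log lp * βp x u)
    + u 3 * βp x v - v 3 * βp x u

/-- The explicit Laplace expansion of `wedge1111`. -/
lemma wedge1111_eq {V : Type*} (α₁ α₂ α₃ α₄ : V → ℝ) (a b c d : V) :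
    wedge1111 α₁ α₂ α₃ α₄ a b c d =
      α₁ a * (α₂ b * (α₃ c * α₄ d - α₃ d * α₄ c) - α₂ c * (α₃ b * α₄ d - α₃ d * α₄ b)
        + α₂ d * (α₃ b * α₄ c - α₃ c * α₄ b))
      - α₁ b * (α₂ a * (α₃ c * α₄ d - α₃ d * α₄ c) - α₂ c * (α₃ a * α₄ d - α₃ d * α₄ a)
        + α₂ d * (α₃ a * α₄ c - α₃ c * α₄ a))
      + α₁ c * (α₂ a * (α₃ b * α₄ d - α₃ d * α₄ b) - α₂ b * (α₃ a * α₄ d - α₃ d * α₄ a)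
        + α₂ d * (α₃ a * α₄ b - α₃ b * α₄ a))
      - α₁ d * (α₂ a * (α₃ b * α₄ c - α₃ c * α₄ b) - α₂ b * (α₃ a * α₄ c - α₃ c * α₄ a)
        + α₂ c * (α₃ a * α₄ b - α₃ b * α₄ a)) := by
  simp (config := { decide := true }) [wedge1111, Matrix.det_succ_row_zero, Fin.sum_univ_succ,
    Fin.succAbove, Matrix.submatrix_apply,
    show (Fin.castSucc (2:Fin 3) : Fin 4) = 2 from rfl]
  ring

/-- Solving a 2×2 linear system with nonzero determinant. -/
lemma solve22 {m0 m1 p0 p1 A B : ℝ} (hd : m0 * p1 - m1 * p0 ≠ 0)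
    (h0 : m0 * A + p0 * B = 0) (h1 : m1 * A + p1 * B = 0) : A = 0 ∧ B = 0 := by
  constructor
  · have hA : A * (m0 * p1 - m1 * p0) = 0 := by linear_combination p1 * h0 - p0 * h1
    rcases mul_eq_zero.mp hA with h | h
    · exact h
    · exact absurd h hd
  · have hB : B * (m0 * p1 - m1 * p0) = 0 := by linear_combination m0 * h1 - m1 * h0
    rcases mul_eq_zero.mp hB with h | h
    · exact h
    · exact absurd h hd

/-- Decomposition of a linear functional on `ℝ⁴` in the standard basis. -/
lemma lin_decomp (f : (Fin 4 → ℝ) →ₗ[ℝ] ℝ) (u : Fin 4 → ℝ) :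
    f u = u 0 * f (Pi.single 0 1) + u 1 * f (Pi.single 1 1)
      + u 2 * f (Pi.single 2 1) + u 3 * f (Pi.single 3 1) := by
  have hu : u = u 0 • (Pi.single 0 1 : Fin 4 → ℝ) + u 1 • (Pi.single 1 1 : Fin 4 → ℝ)
      + u 2 • (Pi.single 2 1 : Fin 4 → ℝ) + u 3 • (Pi.single 3 1 : Fin 4 → ℝ) := by
    funext i; fin_cases i <;> simp [Pi.single_apply]
  conv_lhs => rw [hu]
  simp [map_add, map_smul]

/-- On `ℝ⁴` with coordinates `(x,y,z,s)`, if `β₋ ∧ β₊` is nowhere zero and both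
`β_±` annihilate `∂z, ∂s`, then for `Ω = dz ∧ (ln λ₋·β₋ + s·ln λ₊·β₊) + ds ∧ β₊`
one has `Ω ∧ Ω = 2·(ln λ₋)·dz ∧ β₋ ∧ ds ∧ β₊`, which is nowhere zero, so `Ω` is a
(nondegenerate) symplectic form. -/
theorem Omega_is_symplectic
    (lm lp : ℝ) (hlm0 : 0 < lm) (hlm1 : lm < 1) (hprod : lm * lp = 1)
    (βm βp : (Fin 4 → ℝ) → ((Fin 4 → ℝ) →ₗ[ℝ] ℝ))
    (hmz : ∀ x, βm x (Pi.single 2 1) = 0) (hms : ∀ x, βm x (Pi.single 3 1) = 0)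
    (hpz : ∀ x, βp x (Pi.single 2 1) = 0) (hps : ∀ x, βp x (Pi.single 3 1) = 0)
    (hwedge : ∀ x, βm x (Pi.single 0 1) * βp x (Pi.single 1 1)
        - βm x (Pi.single 1 1) * βp x (Pi.single 0 1) ≠ 0) :
    (∀ x a b c d : Fin 4 → ℝ,
      wedge22 (OmegaForm lm lp βm βp x) (OmegaForm lm lp βm βp x) a b c d
        = 2 * Real.log lm
            * wedge1111 (fun u => u 2) (βm x) (fun u => u 3) (βp x) a b c d) ∧
    (∀ x : Fin 4 → ℝ, ∃ a b c d : Fin 4 → ℝ,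
      wedge22 (OmegaForm lm lp βm βp x) (OmegaForm lm lp βm βp x) a b c d ≠ 0) ∧
    (∀ x u : Fin 4 → ℝ, (∀ v, OmegaForm lm lp βm βp x u v = 0) → u = 0) := by
  have hlog : Real.log lm ≠ 0 := ne_of_lt (Real.log_neg hlm0 hlm1)
  have hmain : ∀ x a b c d : Fin 4 → ℝ,
      wedge22 (OmegaForm lm lp βm βp x) (OmegaForm lm lp βm βp x) a b c d
        = 2 * Real.log lm
            * wedge1111 (fun u => u 2) (βm x) (fun u => u 3) (βp x) a b c d := by
    intro x a b c d
    rw [wedge1111_eq]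
    simp only [wedge22, OmegaForm]
    ring
  refine ⟨hmain, ?_, ?_⟩
  · -- nonvanishing of Ω ∧ Ω on the standard basis vectors
    intro x
    refine ⟨Pi.single 0 1, Pi.single 1 1, Pi.single 2 1, Pi.single 3 1, ?_⟩
    rw [hmain, wedge1111_eq]
    simp (config := { decide := true }) only [Pi.single_apply, if_true, if_false]
    norm_num
    exact ⟨⟨ne_of_gt hlm0, ne_of_lt hlm1, by linarith⟩,
      fun h => hwedge x (by linear_combination -h)⟩
  · -- nondegeneracy
    intro x u hu
    have h2 : OmegaForm lm lp βm βp x u (Pi.single 2 1) = 0 := hu _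
    have h3 : OmegaForm lm lp βm βp x u (Pi.single 3 1) = 0 := hu _
    simp (config := { decide := true }) [OmegaForm, hmz, hms, hpz, hps, Pi.single_apply] at h2 h3
    -- h2 : Real.log lm * βm x u + x 3 * Real.log lp * βp x u = 0
    -- h3 : βp x u = 0
    have h0 : OmegaForm lm lp βm βp x u (Pi.single 0 1) = 0 := hu _
    have h1 : OmegaForm lm lp βm βp x u (Pi.single 1 1) = 0 := hu _
    simp (config := { decide := true }) [OmegaForm, Pi.single_apply] at h0 h1
    -- these give: u 2 * γ(e_i) + u 3 * βp(e_i) = 0 for i = 0,1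
    have e0 : βm x (Pi.single 0 1) * (u 2 * Real.log lm)
        + βp x (Pi.single 0 1) * (u 2 * (x 3 * Real.log lp) + u 3) = 0 := by
      linear_combination h0
    have e1 : βm x (Pi.single 1 1) * (u 2 * Real.log lm)
        + βp x (Pi.single 1 1) * (u 2 * (x 3 * Real.log lp) + u 3) = 0 := by
      linear_combination h1
    have hd : βm x (Pi.single 0 1) * βp x (Pi.single 1 1)
        - βm x (Pi.single 1 1) * βp x (Pi.single 0 1) ≠ 0 := hwedge x
    obtain ⟨hA, hB⟩ := solve22 hd e0 e1
    have hu2 : u 2 = 0 := by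
      rcases mul_eq_zero.mp hA with h | h
      · exact h
      · exact absurd h hlog
    have hu3 : u 3 = 0 := by
      have := hB; rw [hu2] at this; simpa using this
    -- Now βp x u = 0 and from h2, βm x u = 0
    have hpu : βp x u = 0 := h3
    have hmu : βm x u = 0 := by
      have : Real.log lm * βm x u = 0 := by
        have := h2; rw [hpu] at this; linarith [this]
      rcases mul_eq_zero.mp this with h | h
      · exact absurd h hlog
      · exact h
    rw [lin_decomp (βm x) u, hmz, hms, hu2, hu3] at hmu
    rw [lin_decomp (βp x) u, hpz, hps, hu2, hu3] at hpu
    norm_num at hmu hpu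
    have e0' : βm x (Pi.single 0 1) * u 0 + βm x (Pi.single 1 1) * u 1 = 0 := by
      linear_combination hmu
    have e1' : βp x (Pi.single 0 1) * u 0 + βp x (Pi.single 1 1) * u 1 = 0 := by
      linear_combination hpu
    have hd' : βm x (Pi.single 0 1) * βp x (Pi.single 1 1)
        - βp x (Pi.single 0 1) * βm x (Pi.single 1 1) ≠ 0 := by
      intro h; exact hwedge x (by linear_combination h)
    obtain ⟨hu0, hu1⟩ := solve22 hd' e0' e1'
    funext i
    fin_cases i
    · exact hu0
    · exact hu1
    · exact hu2
    · exact hu3
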